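/- Assume ‖θ‖ > 1. Then there exists a nonzero restricted power series Ω ∈ K†{t} satisfying Ω = (t−θ)·τ(Ω); moreover, every g ∈ K†{t} satisfying g = (t−θ)·τ(g) is of the form g = p·Ω for a unique polynomial p ∈ K†[t] all of whose coefficients c satisfy c^q = c (i.e. p has coefficients in k). In other words, the k[t]-module of solutions of g = (t−θ)τ(g) in K†{t} is free of rank one, generated by Ω. -/

import Mathlib

/-!
STATEMENT 7. `K` is a field containing the finite field `k` with `q = p ^ n` elements,
`θ ∈ K`; `K†` (= `Kd`) is a field containing `K`, algebraically closed and complete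
w.r.t. a nontrivial nonarchimedean absolute value, and `‖θ‖ > 1`.  `K†{t}` is the ring
of restricted power series (coefficients tending to `0`) and `τ` raises every
coefficient to the `q`-th power.

Statement: there is a nonzero restricted `Ω ∈ K†{t}` with `Ω = (t-θ)·τ(Ω)`, and every
restricted `g` with `g = (t-θ)·τ(g)` is uniquely `g = p₀·Ω` with `p₀` a polynomial all
of whose coefficients `c` satisfy `c^q = c` (i.e. `p₀ ∈ k[t]`): the `k[t]`-module of
solutions is free of rank one, generated by `Ω`.
-/

/-- Restricted power series: the coefficients tend to `0`. -/
def IsRestricted (Kd : Type) [NormedField Kd] (f : PowerSeries Kd) : Prop :=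
  Filter.Tendsto (fun i => ‖(PowerSeries.coeff i) f‖) Filter.atTop (nhds 0)

/-
Up to a scalar, `Ω` is the infinite product `∏ (1 - θ^(-q^i) t)`: its partial products `P N`
satisfy `P (N + 1) = (1 - θ⁻¹ t) τ(P N)` and, since `‖θ^(-q^i)‖` decays doubly exponentially,
converge coefficientwise. A scalar `a` with `a ^ (q - 1) = -θ⁻¹` turns `1 - θ⁻¹ t` into `t - θ`.
The constant term of `Ω` strictly dominates its other coefficients, so `Ω` is a unit of `K†⟦t⟧`
and for a solution `g` the quotient `h = g / Ω` is fixed by `τ`: its coefficients are roots of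
`x ^ q = x`, hence of norm `0` or `1`. By the strict ultrametric inequality each coefficient of
`h` of norm `1` yields a coefficient of `g = h Ω` whose norm is that of the constant term of `Ω`,
so `h` is a polynomial because `g` is restricted.
-/

open Filter Topology IsUltrametricDist
open scoped PowerSeries.WithPiTopology

lemma norm_eq_one_of_pow_eq_self {K : Type*} [NormedDivisionRing K] {q : ℕ} (hq : 1 < q)
    {x : K} (hx : x ^ q = x) (hx0 : x ≠ 0) : ‖x‖ = 1 := by
  have hpow : x ^ (q - 1) = 1 :=
    mul_right_cancel₀ hx0 (by rw [← pow_succ, Nat.sub_add_cancel hq.le, hx, one_mul])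
  have hnorm := congrArg norm hpow
  rw [norm_pow, norm_one] at hnorm
  exact (pow_eq_one_iff_of_nonneg (norm_nonneg x) (by omega)).1 hnorm

namespace PowerSeries

section CommRing

variable {R : Type*} [CommRing R]

noncomputable def partialProd (u : ℕ → R) (N : ℕ) : R⟦X⟧ :=
  ∏ i ∈ Finset.range N, (1 - C (u i) * X)

lemma partialProd_succ (u : ℕ → R) (N : ℕ) :
    partialProd u (N + 1) = partialProd u N - C (u N) * (X * partialProd u N) := by
  simp only [partialProd, Finset.prod_range_succ]
  ring

lemma partialProd_succ_eq_mul_map {u : ℕ → R} {φ : R →+* R}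
    (hφu : ∀ i, φ (u i) = u (i + 1)) (N : ℕ) :
    partialProd u (N + 1) = (1 - C (u 0) * X) * PowerSeries.map φ (partialProd u N) := by
  simp only [partialProd, map_prod, map_sub, map_one, map_mul, map_C, map_X, hφu]
  exact (Finset.prod_range_succ' _ _).trans (mul_comm _ _)

lemma constantCoeff_partialProd (u : ℕ → R) (N : ℕ) :
    constantCoeff (partialProd u N) = 1 := by
  simp [partialProd, map_prod]

end CommRing

lemma eq_mul_map_of_tendsto_partialProd {K : Type*} [Field K] [TopologicalSpace K]
    [IsTopologicalRing K] [T2Space K] {u : ℕ → K} {φ : K →+* K} (hφ : Continuous φ)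
    (hφu : ∀ i, φ (u i) = u (i + 1)) {B : K⟦X⟧} (hB : Tendsto (partialProd u) atTop (𝓝 B)) :
    B = (1 - C (u 0) * X) * PowerSeries.map φ B := by
  have hmap : Tendsto (fun N => PowerSeries.map φ (partialProd u N)) atTop
      (𝓝 (PowerSeries.map φ B)) := by
    rw [WithPiTopology.tendsto_iff_coeff_tendsto] at hB ⊢
    intro m
    exact (hφ.tendsto _).comp (hB m)
  refine tendsto_nhds_unique (hB.comp (tendsto_add_atTop_nat 1)) ?_
  simpa only [Function.comp_def, partialProd_succ_eq_mul_map hφu] using hmap.const_mul _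

section Ultrametric

variable {K : Type*} [NormedField K] [IsUltrametricDist K]

section PartialProd

variable {u : ℕ → K} {r : ℝ}

lemma norm_coeff_partialProd_le (hr0 : 0 ≤ r) (hu : ∀ i, ‖u i‖ ≤ r) (N m : ℕ) :
    ‖coeff m (partialProd u N)‖ ≤ r ^ m := by
  induction N generalizing m with
  | zero =>
    rw [partialProd, Finset.prod_range_zero, coeff_one]
    split_ifs with hm
    · simp [hm]
    · simpa using pow_nonneg hr0 m
  | succ N ih =>
    rw [partialProd_succ, map_sub, coeff_C_mul, sub_eq_add_neg]
    refine (norm_add_le_max _ _).trans (max_le (ih m) ?_)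
    rw [norm_neg, norm_mul]
    cases m with
    | zero => simp
    | succ k =>
      rw [coeff_succ_X_mul, pow_succ']
      exact mul_le_mul (hu N) (ih k) (norm_nonneg _) hr0

lemma norm_coeff_partialProd_succ_sub_le (hr0 : 0 ≤ r) (hr1 : r ≤ 1) (hu : ∀ i, ‖u i‖ ≤ r)
    (N m : ℕ) :
    ‖coeff m (partialProd u (N + 1)) - coeff m (partialProd u N)‖ ≤ ‖u N‖ := by
  rw [← map_sub, partialProd_succ, sub_sub_cancel_left, map_neg, norm_neg, coeff_C_mul, norm_mul]
  refine mul_le_of_le_one_right (norm_nonneg _) ?_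
  cases m with
  | zero => simp
  | succ k =>
    rw [coeff_succ_X_mul]
    exact (norm_coeff_partialProd_le hr0 hu N k).trans (pow_le_one₀ hr0 hr1)

lemma norm_coeff_le_of_tendsto_partialProd (hr0 : 0 ≤ r) (hu : ∀ i, ‖u i‖ ≤ r) {B : K⟦X⟧}
    (hB : Tendsto (partialProd u) atTop (𝓝 B)) (m : ℕ) : ‖coeff m B‖ ≤ r ^ m :=
  le_of_tendsto ((WithPiTopology.continuous_coeff K m).tendsto B |>.comp hB).norm
    (Eventually.of_forall fun N => norm_coeff_partialProd_le hr0 hu N m)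

lemma exists_tendsto_partialProd [CompleteSpace K] (hr0 : 0 ≤ r) (hr1 : r < 1)
    (hu : ∀ i, ‖u i‖ ≤ r ^ (i + 1)) :
    ∃ B : K⟦X⟧, Tendsto (partialProd u) atTop (𝓝 B) ∧ ∀ m, ‖coeff m B‖ ≤ r ^ m := by
  have hu' : ∀ i, ‖u i‖ ≤ r := fun i => (hu i).trans (pow_le_of_le_one hr0 hr1.le i.succ_ne_zero)
  have hcauchy (m : ℕ) : CauchySeq fun N => coeff m (partialProd u N) :=
    cauchySeq_of_le_geometric r r hr1 fun N => by
      rw [dist_comm, dist_eq_norm, ← pow_succ']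
      exact (norm_coeff_partialProd_succ_sub_le hr0 hr1.le hu' N m).trans (hu N)
  choose b hb using fun m => cauchySeq_tendsto_of_complete (hcauchy m)
  have hB : Tendsto (partialProd u) atTop (𝓝 (mk b)) :=
    (WithPiTopology.tendsto_iff_coeff_tendsto _ _ _ _).2 fun m => by simpa using hb m
  exact ⟨mk b, hB, norm_coeff_le_of_tendsto_partialProd hr0 hu' hB⟩

end PartialProd

theorem exists_eq_X_sub_C_mul_map [CompleteSpace K] [IsAlgClosed K] {q : ℕ} (hq : 1 < q)
    {φ : K →+* K} (hφ : ∀ x, φ x = x ^ q) {c : K} (hc : 1 < ‖c‖) :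
    ∃ Ω : K⟦X⟧, constantCoeff Ω ≠ 0 ∧
      (∀ m, ‖coeff m Ω‖ ≤ ‖constantCoeff Ω‖ * ‖c‖⁻¹ ^ m) ∧
      Ω = (X - C c) * PowerSeries.map φ Ω := by
  have hc0 : c ≠ 0 := norm_pos_iff.1 (one_pos.trans hc)
  set u : ℕ → K := fun i => c⁻¹ ^ q ^ i
  have hu (i : ℕ) : ‖u i‖ ≤ ‖c‖⁻¹ ^ (i + 1) := by
    simp only [u, norm_pow, norm_inv]
    exact pow_le_pow_of_le_one (by positivity) (inv_le_one_of_one_le₀ hc.le) (Nat.lt_pow_self hq)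
  have hφu (i : ℕ) : φ (u i) = u (i + 1) := by simp only [u, hφ, ← pow_mul, ← pow_succ]
  obtain ⟨B, hB, hBnorm⟩ :=
    exists_tendsto_partialProd (by positivity) (inv_lt_one_of_one_lt₀ hc) hu
  have hB0 : constantCoeff B = 1 :=
    tendsto_nhds_unique ((WithPiTopology.continuous_constantCoeff K).tendsto B |>.comp hB)
      (by simp only [Function.comp_def, constantCoeff_partialProd, tendsto_const_nhds])
  have hBeq := eq_mul_map_of_tendsto_partialProd
    ((continuous_pow q).congr fun x => (hφ x).symm) hφu hB
  -- `a ^ (q - 1) = -c⁻¹` gives `a * (1 - c⁻¹ X) = (X - c) * a ^ q`, so `C a * B` solves the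
  -- equation with `X - C c` in place of `1 - C c⁻¹ * X`
  obtain ⟨a, ha⟩ := IsAlgClosed.exists_pow_nat_eq (-c⁻¹) (Nat.sub_pos_of_lt hq)
  have ha0 : a ≠ 0 := by
    rintro rfl
    exact neg_ne_zero.2 (inv_ne_zero hc0) (by rw [← ha, zero_pow (by omega)])
  have hφa : φ a = -(a * c⁻¹) := by
    rw [hφ, ← Nat.sub_add_cancel hq.le, pow_succ, ha]
    ring
  refine ⟨C a * B, by simp [hB0, ha0], fun m => ?_, ?_⟩
  · rw [coeff_C_mul, map_mul, constantCoeff_C, hB0, mul_one, norm_mul]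
    exact mul_le_mul_of_nonneg_left (hBnorm m) (norm_nonneg a)
  · have hcc : C c * C c⁻¹ = (1 : K⟦X⟧) := by rw [← map_mul, mul_inv_cancel₀ hc0, map_one]
    nth_rw 1 [hBeq]
    rw [map_mul, map_C, hφa, map_neg, map_mul, show u 0 = c⁻¹ by simp [u]]
    linear_combination (-(C a * PowerSeries.map φ B)) * hcc

lemma norm_coeff_mul_eq_of_norm_coeff_eq_one {h Ω : K⟦X⟧} {ρ : ℝ} {m : ℕ}
    (hh : ∀ i, ‖coeff i h‖ ≤ 1) (hm : ‖coeff m h‖ = 1) (hΩ : ∀ j, j ≠ 0 → ‖coeff j Ω‖ ≤ ρ)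
    (hρ0 : 0 ≤ ρ) (hρ : ρ < ‖constantCoeff Ω‖) :
    ‖coeff m (h * Ω)‖ = ‖constantCoeff Ω‖ := by
  have htail : ‖coeff m (h * (Ω - C (constantCoeff Ω)))‖ ≤ ρ := by
    rw [coeff_mul]
    refine norm_sum_le_of_forall_le_of_nonneg hρ0 fun x _ => ?_
    rw [norm_mul, map_sub, coeff_C]
    split_ifs with hx
    · simp [hx, hρ0]
    · simpa using mul_le_mul (hh x.1) (hΩ x.2 hx) (norm_nonneg _) zero_le_one
  have hsplit : h * Ω = C (constantCoeff Ω) * h + h * (Ω - C (constantCoeff Ω)) := by ring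
  rw [hsplit, map_add, coeff_C_mul, norm_add_eq_max_of_norm_ne_norm] <;>
    rw [norm_mul, hm, mul_one]
  · exact max_eq_left (htail.trans hρ.le)
  · exact (htail.trans_lt hρ).ne'

end Ultrametric

lemma map_mul_inv_eq_self {K : Type*} [Field K] (φ : K →+* K) {Ω g : K⟦X⟧}
    (hΩ : constantCoeff Ω ≠ 0) (h : g * PowerSeries.map φ Ω = Ω * PowerSeries.map φ g) :
    PowerSeries.map φ (g * Ω⁻¹) = g * Ω⁻¹ :=
  calc PowerSeries.map φ (g * Ω⁻¹)
      = Ω⁻¹ * (Ω * PowerSeries.map φ g) * PowerSeries.map φ Ω⁻¹ := by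
        rw [map_mul, ← mul_assoc Ω⁻¹, PowerSeries.inv_mul_cancel _ hΩ, one_mul]
    _ = Ω⁻¹ * g * (PowerSeries.map φ Ω * PowerSeries.map φ Ω⁻¹) := by rw [← h]; ring
    _ = g * Ω⁻¹ := by rw [← map_mul, PowerSeries.mul_inv_cancel _ hΩ, map_one]; ring

lemma isRestricted_of_norm_coeff_le {K : Type} [NormedField K] {f : K⟦X⟧} {A r : ℝ}
    (hr0 : 0 ≤ r) (hr1 : r < 1) (hf : ∀ m, ‖coeff m f‖ ≤ A * r ^ m) : _root_.IsRestricted K f :=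
  squeeze_zero (fun _ => norm_nonneg _) hf
    (by simpa using (tendsto_pow_atTop_nhds_zero_of_lt_one hr0 hr1).const_mul A)

lemma exists_polynomial_eq_of_isRestricted_mul {K : Type} [NormedField K] [IsUltrametricDist K]
    {q : ℕ} (hq : 1 < q) {h Ω : K⟦X⟧} {ρ : ℝ} (hfix : ∀ i, coeff i h ^ q = coeff i h)
    (hΩ : ∀ j, j ≠ 0 → ‖coeff j Ω‖ ≤ ρ) (hρ0 : 0 ≤ ρ) (hρ : ρ < ‖constantCoeff Ω‖)
    (hres : _root_.IsRestricted K (h * Ω)) : ∃ p : Polynomial K, (p : K⟦X⟧) = h := by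
  have hnorm (i : ℕ) (hi : coeff i h ≠ 0) : ‖coeff i h‖ = 1 :=
    norm_eq_one_of_pow_eq_self hq (hfix i) hi
  have hle (i : ℕ) : ‖coeff i h‖ ≤ 1 := by
    by_cases hi : coeff i h = 0
    · simp [hi]
    · exact (hnorm i hi).le
  obtain ⟨M, hM⟩ := eventually_atTop.1 (hres.eventually (gt_mem_nhds (hρ0.trans_lt hρ)))
  refine ⟨trunc M h, ext fun i => ?_⟩
  rw [Polynomial.coeff_coe, coeff_trunc]
  split_ifs with hi
  · rfl
  · by_contra hne
    exact (hM i (not_lt.1 hi)).ne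
      (norm_coeff_mul_eq_of_norm_coeff_eq_one hle (hnorm i (Ne.symm hne)) hΩ hρ0 hρ)

theorem existsUnique_polynomial_mul_of_eq_mul_map {K : Type} [NormedField K]
    [IsUltrametricDist K] {q : ℕ} (hq : 1 < q) {φ : K →+* K} (hφ : ∀ x, φ x = x ^ q)
    {L Ω g : K⟦X⟧} {r : ℝ} (hr0 : 0 ≤ r) (hr1 : r < 1) (hΩ0 : constantCoeff Ω ≠ 0)
    (hΩ : ∀ m, ‖coeff m Ω‖ ≤ ‖constantCoeff Ω‖ * r ^ m) (hΩeq : Ω = L * PowerSeries.map φ Ω)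
    (hg : _root_.IsRestricted K g) (hgeq : g = L * PowerSeries.map φ g) :
    ∃! p₀ : Polynomial K, (∀ i, p₀.coeff i ^ q = p₀.coeff i) ∧ g = p₀ * Ω := by
  have hΩne : Ω ≠ 0 := fun h => hΩ0 (by simp [h])
  have hgh : g = g * Ω⁻¹ * Ω := by rw [mul_assoc, PowerSeries.inv_mul_cancel _ hΩ0, mul_one]
  have hcomm : g * PowerSeries.map φ Ω = Ω * PowerSeries.map φ g := by
    calc g * PowerSeries.map φ Ω = L * PowerSeries.map φ g * PowerSeries.map φ Ω := by
          rw [← hgeq]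
      _ = L * PowerSeries.map φ Ω * PowerSeries.map φ g := by ring
      _ = Ω * PowerSeries.map φ g := by rw [← hΩeq]
  have hfix (i : ℕ) : coeff i (g * Ω⁻¹) ^ q = coeff i (g * Ω⁻¹) := by
    rw [← hφ, ← coeff_map, map_mul_inv_eq_self φ hΩ0 hcomm]
  have hρ : ‖constantCoeff Ω‖ * r < ‖constantCoeff Ω‖ :=
    mul_lt_of_lt_one_right (norm_pos_iff.2 hΩ0) hr1
  obtain ⟨p₀, hp₀⟩ := exists_polynomial_eq_of_isRestricted_mul hq hfix
    (fun j hj => (hΩ j).trans (mul_le_mul_of_nonneg_left (pow_le_of_le_one hr0 hr1.le hj)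
      (norm_nonneg _))) (by positivity) hρ (hgh ▸ hg)
  refine ⟨p₀, ⟨fun i => by rw [← Polynomial.coeff_coe, hp₀, hfix], by rw [hp₀, ← hgh]⟩, ?_⟩
  rintro p₁ ⟨-, hp₁⟩
  exact Polynomial.coe_inj.1 (mul_right_cancel₀ hΩne (hp₁.symm.trans (hp₀ ▸ hgh)))

end PowerSeries

theorem stmt_7
    (p n : ℕ) [Fact p.Prime] (hn : 0 < n)
    (K : Type) [Field K] (θ : K)
    (Kd : Type) [NontriviallyNormedField Kd] [CompleteSpace Kd] [IsAlgClosed Kd]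
    [CharP Kd p] [Algebra K Kd]
    (hna : IsNonarchimedean (fun x : Kd => ‖x‖))
    (hθ : 1 < ‖algebraMap K Kd θ‖) :
    ∃ Ω : PowerSeries Kd, Ω ≠ 0 ∧ IsRestricted Kd Ω ∧
      Ω = (PowerSeries.X - PowerSeries.C (algebraMap K Kd θ)) *
            PowerSeries.map (iterateFrobenius Kd p n) Ω ∧
      ∀ g : PowerSeries Kd, IsRestricted Kd g →
        g = (PowerSeries.X - PowerSeries.C (algebraMap K Kd θ)) *
              PowerSeries.map (iterateFrobenius Kd p n) g →
        ∃! p₀ : Polynomial Kd,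
          (∀ i, (p₀.coeff i) ^ p ^ n = p₀.coeff i) ∧
          g = (p₀ : PowerSeries Kd) * Ω := by
  have : IsUltrametricDist Kd := IsUltrametricDist.isUltrametricDist_of_isNonarchimedean_norm hna
  have hq : 1 < p ^ n := Nat.one_lt_pow hn.ne' (Fact.out : p.Prime).one_lt
  have hφ := iterateFrobenius_def (R := Kd) p n
  have hr0 : 0 ≤ ‖algebraMap K Kd θ‖⁻¹ := by positivity
  have hr1 : ‖algebraMap K Kd θ‖⁻¹ < 1 := inv_lt_one_of_one_lt₀ hθ
  obtain ⟨Ω, hΩ0, hΩ, hΩeq⟩ := PowerSeries.exists_eq_X_sub_C_mul_map hq hφ hθ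
  exact ⟨Ω, fun h => hΩ0 (by simp [h]), PowerSeries.isRestricted_of_norm_coeff_le hr0 hr1 hΩ,
    hΩeq, fun _ hg hgeq =>
      PowerSeries.existsUnique_polynomial_mul_of_eq_mul_map hq hφ hr0 hr1 hΩ0 hΩ hΩeq hg hgeq⟩
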